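/- arXiv:2312.15464 — 2 statements merged into one kernel-verified Lean document; each statement's English description precedes it below -/
import Mathlib

section
/- For every k ≥ 2, γ_k(K(r(k+r)−1, r)) = γ_{×k}(K(r(k+r)−1, r)) = γ_{×k,t}(K(r(k+r)−1, r)) = k + r + 1. -/
open Finset

/-- The vertex set of the Kneser graph `K(n,r)`: the `r`-element subsets of `[n] = {1,…,n}`. -/
def KneserVerts (n r : ℕ) : Finset (Finset ℕ) := (Finset.Icc 1 n).powersetCard r

/-- Adjacency in a Kneser graph: distinct disjoint sets. -/
def KneserAdj (u v : Finset ℕ) : Prop := u ≠ v ∧ Disjoint u v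

instance (u v : Finset ℕ) : Decidable (KneserAdj u v) := by
  unfold KneserAdj; infer_instance

/-- `D` is a `k`-dominating set of `K(n,r)`: every vertex outside `D` has at least
`k` neighbours in `D`. -/
def IsKDomSet (n r k : ℕ) (D : Finset (Finset ℕ)) : Prop :=
  D ⊆ KneserVerts n r ∧
    ∀ v ∈ KneserVerts n r, v ∉ D → k ≤ (D.filter fun u => KneserAdj v u).card

/-- `D` is a `k`-tuple dominating set of `K(n,r)`: every vertex has at least `k`
vertices of `D` in its closed neighbourhood. -/
def IsKTupleDomSet (n r k : ℕ) (D : Finset (Finset ℕ)) : Prop :=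
  D ⊆ KneserVerts n r ∧
    ∀ v ∈ KneserVerts n r, k ≤ (D.filter fun u => u = v ∨ KneserAdj v u).card

/-- `D` is a `k`-tuple total dominating set of `K(n,r)`: every vertex has at least
`k` neighbours in `D`. -/
def IsKTupleTotalDomSet (n r k : ℕ) (D : Finset (Finset ℕ)) : Prop :=
  D ⊆ KneserVerts n r ∧
    ∀ v ∈ KneserVerts n r, k ≤ (D.filter fun u => KneserAdj v u).card

/-- The `k`-domination number `γ_k(K(n,r))`. -/
noncomputable def kdomNum (n r k : ℕ) : ℕ :=
  sInf {m | ∃ D, IsKDomSet n r k D ∧ D.card = m}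

/-- The `k`-tuple domination number `γ_{×k}(K(n,r))`. -/
noncomputable def ktupleDomNum (n r k : ℕ) : ℕ :=
  sInf {m | ∃ D, IsKTupleDomSet n r k D ∧ D.card = m}

/-- The `k`-tuple total domination number `γ_{×k,t}(K(n,r))`. -/
noncomputable def ktupleTotalDomNum (n r k : ℕ) : ℕ :=
  sInf {m | ∃ D, IsKTupleTotalDomSet n r k D ∧ D.card = m}

/-- `S` is a 2-packing of `K(n,r)`: any two distinct members are neither adjacent
nor have a common neighbour (i.e. are at distance at least 3). -/
def IsTwoPacking (n r : ℕ) (S : Finset (Finset ℕ)) : Prop :=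
  S ⊆ KneserVerts n r ∧
    ∀ u ∈ S, ∀ v ∈ S, u ≠ v →
      ¬ KneserAdj u v ∧ ∀ w ∈ KneserVerts n r, ¬ (KneserAdj u w ∧ KneserAdj w v)

/-- The 2-packing number `ρ₂(K(n,r))`. -/
noncomputable def twoPackingNum (n r : ℕ) : ℕ :=
  sSup {m | ∃ S, IsTwoPacking n r S ∧ S.card = m}

/-- A clique in a Kneser graph: a family of pairwise disjoint sets. -/
def IsKneserClique (D : Finset (Finset ℕ)) : Prop :=
  ∀ u ∈ D, ∀ v ∈ D, u ≠ v → Disjoint u v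


/-!
Upper bound: cut `[1, r(k+r-1)]` into `k+r-1` consecutive blocks of size `r`, let `L` be the
remaining `r-1` points of `[n]`, and add the two sets `{1} ∪ L` and `{2} ∪ L`. An `r`-set meets
at most `r+1` of these `k+r+1` sets: if it meets `L`, at most `r-1` of its points are left for
the blocks, and if it contains both `1` and `2`, these two lie in the same block. So every vertex
is disjoint from, hence adjacent to, at least `k` of them.

Lower bound: enlarging a `k`-dominating set keeps it `k`-dominating, so suppose `D` has exactly
`k+r` members; it suffices to find a vertex outside `D` meeting `r+1` of them. The sizes of the
members add up to `r(k+r) = n+1`, so some point `p` lies in two of them. We find a pair `{p, q}`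
contained in no member and meeting three members: if `p` lies in three members, a counting
argument gives a `q` outside their union; otherwise every point lies in at most two members, and
`D` cannot be covered by the union `A ∪ B` of the two members through `p`, which has fewer than
`2r` points, so some member contains a point `q ∉ A ∪ B`. Adding to `{p, q}` one point from each
of `r-2` further members gives the vertex.
-/

section FinsetLemmas

variable {α : Type*} [DecidableEq α]

theorem exists_superset_card_eq_forall_not_disjoint {S F : Finset α} {T : Finset (Finset α)}
    (hF : F ⊆ S) (hT : ∀ A ∈ T, A ⊆ S ∧ #F + #T ≤ #A) :
    ∃ v, F ⊆ v ∧ v ⊆ S ∧ #v = #F + #T ∧ ∀ A ∈ T, ¬Disjoint v A := by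
  induction T using Finset.induction_on with
  | empty => exact ⟨F, Subset.rfl, hF, rfl, by simp⟩
  | @insert A T hAT ih =>
    rw [card_insert_of_notMem hAT] at hT
    obtain ⟨v, hFv, hvS, hv, hvT⟩ :=
      ih fun B hB => (hT B (mem_insert_of_mem hB)).imp_right fun h => by omega
    obtain ⟨hAS, hA⟩ := hT A (mem_insert_self A T)
    obtain ⟨a, haA, hav⟩ := exists_mem_notMem_of_card_lt_card (s := v) (t := A) (by omega)
    refine ⟨insert a v, hFv.trans (subset_insert a v), insert_subset (hAS haA) hvS, ?_, ?_⟩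
    · rw [card_insert_of_notMem hav, hv, card_insert_of_notMem hAT, add_assoc]
    · intro B hB
      rcases mem_insert.1 hB with rfl | hB
      · exact not_disjoint_iff.2 ⟨a, mem_insert_self a v, haA⟩
      · exact fun h => hvT B hB (h.mono_left (subset_insert a v))

theorem card_filter_not_disjoint_le_of_pairwiseDisjoint {P : Finset (Finset α)}
    (hP : (P : Set (Finset α)).PairwiseDisjoint id) {v w : Finset α}
    (hvw : ∀ B ∈ P, ¬Disjoint v B → ¬Disjoint w B) :
    #{B ∈ P | ¬Disjoint v B} ≤ #w := by
  refine card_le_card_of_forall_subsingleton (fun B x => x ∈ B) (fun B hB => ?_)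
    fun x _ B hB B' hB' => ?_
  · rw [mem_filter] at hB
    obtain ⟨x, hxw, hxB⟩ := not_disjoint_iff.1 (hvw B hB.1 hB.2)
    exact ⟨x, hxw, hxB⟩
  · by_contra hne
    exact disjoint_left.1 (hP (mem_filter.1 hB.1).1 (mem_filter.1 hB'.1).1 hne) hB.2 hB'.2

theorem card_mul_le_of_card_filter_mem_le {D : Finset (Finset α)} {s : Finset α} {r c : ℕ}
    (hD : ∀ A ∈ D, A ⊆ s ∧ #A = r) (hc : ∀ x ∈ s, #{A ∈ D | x ∈ A} ≤ c) :
    #D * r ≤ #s * c :=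
  calc #D * r = ∑ A ∈ D, #(s ∩ A) := by
        rw [sum_congr rfl fun A hA => by rw [inter_eq_right.2 (hD A hA).1, (hD A hA).2],
          sum_const, smul_eq_mul]
    _ ≤ #s * c := sum_card_inter_le hc

theorem card_filter_not_disjoint_pair {D : Finset (Finset α)} {p q : α}
    (h : ∀ A ∈ D, p ∈ A → q ∉ A) :
    #{A ∈ D | ¬Disjoint {p, q} A} = #{A ∈ D | p ∈ A} + #{A ∈ D | q ∈ A} := by
  rw [← card_union_of_disjoint (disjoint_filter.2 fun A hA hp hq => h A hA hp hq), ← filter_or]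
  congr 1
  ext A
  simp only [mem_filter, disjoint_insert_left, disjoint_singleton_left]
  tauto

theorem card_filter_not_disjoint_insert_pair_le {v L : Finset α} (a b : α) (hvL : Disjoint v L) :
    #{C ∈ ({insert a L, insert b L} : Finset (Finset α)) | ¬Disjoint v C} ≤
      #(v ∩ {a, b}) := by
  refine (card_le_card fun C hC => ?_).trans (card_image_le (f := (insert · L)))
  simp only [mem_filter, mem_insert, mem_singleton] at hC
  obtain ⟨rfl | rfl, hvC⟩ := hC <;>
  · simp only [disjoint_insert_right, hvL, and_true, not_not] at hvC
    exact mem_image.2 ⟨_, by simp [hvC], rfl⟩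

end FinsetLemmas

theorem mem_kneserVerts {n r : ℕ} {v : Finset ℕ} :
    v ∈ KneserVerts n r ↔ v ⊆ Icc 1 n ∧ #v = r :=
  mem_powersetCard

theorem sub_add_one_le_card_kneserVerts {n r : ℕ} (h1 : 1 ≤ r) (h2 : r ≤ n) :
    n - r + 1 ≤ #(KneserVerts n r) := by
  rw [KneserVerts, card_powersetCard, Nat.card_Icc, Nat.add_sub_cancel, ← Nat.choose_symm h2]
  calc n - r + 1 = (n - r + 1).choose (n - r) := (Nat.choose_succ_self_right _).symm
    _ ≤ n.choose (n - r) := Nat.choose_le_choose _ (by omega)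

section Domination

variable {n r k : ℕ} {D : Finset (Finset ℕ)}

theorem IsKDomSet.mono {D' : Finset (Finset ℕ)} (hD : IsKDomSet n r k D) (hDD' : D ⊆ D')
    (hD' : D' ⊆ KneserVerts n r) : IsKDomSet n r k D' :=
  ⟨hD', fun v hv hvD' => (hD.2 v hv fun h => hvD' (hDD' h)).trans
    (card_le_card (filter_subset_filter _ hDD'))⟩

theorem IsKTupleDomSet.isKDomSet (hD : IsKTupleDomSet n r k D) : IsKDomSet n r k D :=
  ⟨hD.1, fun v hv hvD => (hD.2 v hv).trans <| card_le_card fun u hu => by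
    rw [mem_filter] at hu ⊢
    exact ⟨hu.1, hu.2.resolve_left fun h => hvD (h ▸ hu.1)⟩⟩

theorem IsKTupleTotalDomSet.isKTupleDomSet (hD : IsKTupleTotalDomSet n r k D) :
    IsKTupleDomSet n r k D :=
  ⟨hD.1, fun v hv =>
    (hD.2 v hv).trans <| card_le_card <| monotone_filter_right _ fun _ _ => Or.inr⟩

theorem IsKDomSet.card_filter_not_disjoint_add_le (hD : IsKDomSet n r k D) {v : Finset ℕ}
    (hv : v ∈ KneserVerts n r) (hvD : v ∉ D) : #{A ∈ D | ¬Disjoint v A} + k ≤ #D := by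
  have hadj : #{A ∈ D | KneserAdj v A} ≤ #{A ∈ D | Disjoint v A} :=
    card_le_card <| monotone_filter_right _ fun _ _ => And.right
  have := card_filter_add_card_filter_not (s := D) (p := fun A => Disjoint v A)
  have := hD.2 v hv hvD
  omega

end Domination

section LowerBound

variable {n r : ℕ} {D : Finset (Finset ℕ)}

theorem exists_vertex_notMem_meets_of_not_subset {F : Finset ℕ} (hDV : D ⊆ KneserVerts n r)
    (hD : r < #D) (hFn : F ⊆ Icc 1 n) (hFr : #F ≤ r) (hFD : ∀ A ∈ D, ¬F ⊆ A)
    (hF : #F + 1 ≤ #{A ∈ D | ¬Disjoint F A}) :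
    ∃ v ∈ KneserVerts n r, v ∉ D ∧ r + 1 ≤ #{A ∈ D | ¬Disjoint v A} := by
  obtain ⟨H, hH, hHcard⟩ := exists_subset_card_eq hF
  have hHD : H ⊆ D := hH.trans (filter_subset _ _)
  obtain ⟨T, hT, hTcard⟩ := exists_subset_card_eq (s := D \ H) (n := r - #F)
    (by rw [card_sdiff_of_subset hHD]; omega)
  have hTD : T ⊆ D := hT.trans sdiff_subset
  obtain ⟨v, hFv, hvn, hvcard, hvT⟩ := exists_superset_card_eq_forall_not_disjoint hFn
    (T := T) fun A hA => by
      obtain ⟨hAn, hAr⟩ := mem_kneserVerts.1 (hDV (hTD hA))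
      exact ⟨hAn, by omega⟩
  refine ⟨v, mem_kneserVerts.2 ⟨hvn, by omega⟩, fun hv => hFD v hv hFv, ?_⟩
  calc r + 1 = #(H ∪ T) := by
        rw [card_union_of_disjoint (disjoint_of_subset_right hT disjoint_sdiff)]
        omega
    _ ≤ #{A ∈ D | ¬Disjoint v A} := card_le_card fun A hA => by
        rcases mem_union.1 hA with hA | hA
        · exact mem_filter.2 ⟨hHD hA, fun h => (mem_filter.1 (hH hA)).2 (h.mono_left hFv)⟩
        · exact mem_filter.2 ⟨hTD hA, hvT A hA⟩

theorem exists_mem_Icc_ne_forall_notMem (hDV : D ⊆ KneserVerts n r) (hr : 1 ≤ r)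
    (hD : #D * r ≤ n + 1) (hD3 : 3 ≤ #D) (p : ℕ) :
    ∃ q ∈ Icc 1 n, q ≠ p ∧ ∀ A ∈ D, p ∈ A → q ∉ A := by
  set S := {A ∈ D | p ∈ A}.biUnion (·.erase p)
  have hS : #S ≤ #D * (r - 1) :=
    calc #S ≤ ∑ A ∈ D with p ∈ A, #(A.erase p) := card_biUnion_le
      _ = ∑ A ∈ D with p ∈ A, (r - 1) := sum_congr rfl fun A hA => by
          rw [mem_filter] at hA
          rw [card_erase_of_mem hA.2, (mem_kneserVerts.1 (hDV hA.1)).2]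
      _ ≤ #D * (r - 1) := by
          rw [sum_const, smul_eq_mul]
          exact Nat.mul_le_mul_right _ (card_filter_le _ _)
  have hIcc : n - 1 ≤ #((Icc 1 n).erase p) := by
    simpa using pred_card_le_card_erase (s := Icc 1 n) (a := p)
  have : #D ≤ #D * r := Nat.le_mul_of_pos_right _ hr
  obtain ⟨q, hq, hqS⟩ := exists_mem_notMem_of_card_lt_card (s := S) (t := (Icc 1 n).erase p)
    (by rw [Nat.mul_sub_one] at hS; omega)
  refine ⟨q, mem_of_mem_erase hq, ne_of_mem_erase hq, fun A hA hpA hqA => hqS ?_⟩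
  exact mem_biUnion.2 ⟨A, mem_filter.2 ⟨hA, hpA⟩, mem_erase.2 ⟨ne_of_mem_erase hq, hqA⟩⟩

theorem exists_mem_forall_notMem_of_card_filter_mem_le_two (hDV : D ⊆ KneserVerts n r)
    (hD4 : 4 ≤ #D) (h2 : ∀ x, #{A ∈ D | x ∈ A} ≤ 2) {p : ℕ}
    (hp : 2 ≤ #{A ∈ D | p ∈ A}) :
    ∃ E ∈ D, ∃ q ∈ E, ∀ A ∈ D, p ∈ A → q ∉ A := by
  obtain ⟨A, hA, B, hB, hAB⟩ := one_lt_card.1 (show 1 < #{A ∈ D | p ∈ A} by omega)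
  have hpD : {A ∈ D | p ∈ A} = {A, B} :=
    (eq_of_subset_of_card_le (insert_subset hA (singleton_subset_iff.2 hB))
      (by rw [card_pair hAB]; exact h2 p)).symm
  rw [mem_filter] at hA hB
  by_contra! hcov
  have hcover : ∀ E ∈ D, E ⊆ A ∪ B ∧ #E = r := fun E hE =>
    ⟨fun q hq => by
      obtain ⟨C, hC, hpC, hqC⟩ := hcov E hE q hq
      have : C ∈ ({A, B} : Finset (Finset ℕ)) := hpD ▸ mem_filter.2 ⟨hC, hpC⟩
      rcases mem_insert.1 this with rfl | h
      · exact mem_union_left _ hqC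
      · exact mem_union_right _ (mem_singleton.1 h ▸ hqC),
    (mem_kneserVerts.1 (hDV hE)).2⟩
  have hcount := card_mul_le_of_card_filter_mem_le hcover fun x _ => h2 x
  have hunion := card_union_add_card_inter A B
  have hinter : 1 ≤ #(A ∩ B) := card_pos.2 ⟨p, mem_inter.2 ⟨hA.2, hB.2⟩⟩
  have : 4 * r ≤ #D * r := Nat.mul_le_mul_right _ hD4
  rw [(mem_kneserVerts.1 (hDV hA.1)).2, (mem_kneserVerts.1 (hDV hB.1)).2] at hunion
  omega

theorem exists_pair_not_subset_three_le (hDV : D ⊆ KneserVerts n r) (hr : 1 ≤ r)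
    (hD : #D * r = n + 1) (hD4 : 4 ≤ #D) :
    ∃ F : Finset ℕ, #F = 2 ∧ F ⊆ Icc 1 n ∧ (∀ A ∈ D, ¬F ⊆ A) ∧
      3 ≤ #{A ∈ D | ¬Disjoint F A} := by
  suffices ∃ p ∈ Icc 1 n, ∃ q ∈ Icc 1 n, p ≠ q ∧ (∀ A ∈ D, p ∈ A → q ∉ A) ∧
      3 ≤ #{A ∈ D | p ∈ A} + #{A ∈ D | q ∈ A} by
    obtain ⟨p, hp, q, hq, hpq, hpqD, h3⟩ := this
    refine ⟨{p, q}, card_pair hpq, insert_subset hp (singleton_subset_iff.2 hq),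
      fun A hA h => hpqD A hA (h (mem_insert_self _ _))
        (h (mem_insert_of_mem (mem_singleton_self _))),
      by rwa [card_filter_not_disjoint_pair hpqD]⟩
  have mem_Icc_of_mem {p : ℕ} {A : Finset ℕ} (hA : A ∈ D) (hp : p ∈ A) : p ∈ Icc 1 n :=
    (mem_kneserVerts.1 (hDV hA)).1 hp
  by_cases h3 : ∃ p, 3 ≤ #{A ∈ D | p ∈ A}
  · obtain ⟨p, hp⟩ := h3
    obtain ⟨A, hA⟩ := card_pos.1 (show 0 < #{A ∈ D | p ∈ A} by omega)
    obtain ⟨q, hq, hqp, hpq⟩ := exists_mem_Icc_ne_forall_notMem hDV hr hD.le (by omega) p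
    rw [mem_filter] at hA
    exact ⟨p, mem_Icc_of_mem hA.1 hA.2, q, hq, hqp.symm, hpq, by omega⟩
  · push Not at h3
    obtain ⟨p, hp⟩ : ∃ p, 2 ≤ #{A ∈ D | p ∈ A} := by
      by_contra! h1
      have := card_mul_le_of_card_filter_mem_le (s := Icc 1 n) (c := 1)
        (fun A hA => mem_kneserVerts.1 (hDV hA)) fun x _ => Nat.le_of_lt_succ (h1 x)
      simp only [Nat.card_Icc, Nat.add_sub_cancel, mul_one] at this
      omega
    obtain ⟨E, hE, q, hqE, hpq⟩ := exists_mem_forall_notMem_of_card_filter_mem_le_two hDV hD4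
      (fun x => Nat.le_of_lt_succ (h3 x)) hp
    obtain ⟨A, hA⟩ := card_pos.1 (show 0 < #{A ∈ D | p ∈ A} by omega)
    rw [mem_filter] at hA
    have hq : 1 ≤ #{A ∈ D | q ∈ A} := card_pos.2 ⟨E, mem_filter.2 ⟨hE, hqE⟩⟩
    exact ⟨p, mem_Icc_of_mem hA.1 hA.2, q, mem_Icc_of_mem hE hqE,
      fun h => hpq A hA.1 hA.2 (h ▸ hA.2), hpq, by omega⟩

theorem IsKDomSet.add_add_one_le_card {k : ℕ} (hk : 2 ≤ k) (hr : 2 ≤ r)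
    (hD : IsKDomSet (r * (k + r) - 1) r k D) : k + r + 1 ≤ #D := by
  set n := r * (k + r) - 1
  have h2 : 2 * (k + r) ≤ r * (k + r) := Nat.mul_le_mul_right _ hr
  have hn : r * (k + r) = n + 1 := by omega
  have hV : k + r ≤ #(KneserVerts n r) :=
    le_trans (by omega) (sub_add_one_le_card_kneserVerts (by omega) (by omega))
  by_contra! hlt
  obtain ⟨D', hDD', hD'V, hD'⟩ := exists_subsuperset_card_eq hD.1 (by omega) hV
  obtain ⟨F, hF2, hFn, hFD, hF3⟩ :=
    exists_pair_not_subset_three_le hD'V (by omega) (by rw [hD', ← hn, mul_comm]) (by omega)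
  obtain ⟨v, hv, hvD', hvD'meet⟩ :=
    exists_vertex_notMem_meets_of_not_subset hD'V (by omega) hFn (by omega) hFD (by omega)
  have := (hD.mono hDD' hD'V).card_filter_not_disjoint_add_le hv hvD'
  omega

end LowerBound

def kneserBlock (r i : ℕ) : Finset ℕ := Icc (r * i + 1) (r * i + r)

def kneserBlocks (N r : ℕ) : Finset (Finset ℕ) := (range N).image (kneserBlock r)

def kneserTail (N r : ℕ) : Finset ℕ := Icc (r * N + 1) (r * N + r - 1)

def blockDomSet (N r : ℕ) : Finset (Finset ℕ) :=
  kneserBlocks N r ∪ {insert 1 (kneserTail N r), insert 2 (kneserTail N r)}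

section UpperBound

variable {N r : ℕ}

theorem card_kneserBlock (r i : ℕ) : #(kneserBlock r i) = r := by
  simp [kneserBlock]

theorem disjoint_kneserBlock {i j : ℕ} (h : i ≠ j) :
    Disjoint (kneserBlock r i) (kneserBlock r j) := by
  wlog hij : i < j generalizing i j
  · exact (this h.symm (by omega)).symm
  have : r * i + r ≤ r * j := by rw [← Nat.mul_add_one]; exact Nat.mul_le_mul_left _ hij
  simp only [kneserBlock, disjoint_left, mem_Icc]
  omega

theorem kneserBlock_subset {i : ℕ} (hi : i < N) : kneserBlock r i ⊆ Icc 1 (r * N) := by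
  have : r * i + r ≤ r * N := by rw [← Nat.mul_add_one]; exact Nat.mul_le_mul_left _ hi
  intro x
  simp only [kneserBlock, mem_Icc]
  omega

theorem notMem_kneserTail {x : ℕ} (hx : x ≤ r * N) : x ∉ kneserTail N r := by
  simp only [kneserTail, mem_Icc]
  omega

theorem pairwiseDisjoint_kneserBlocks :
    (kneserBlocks N r : Set (Finset ℕ)).PairwiseDisjoint id := by
  rintro _ hB _ hB' hne
  simp only [kneserBlocks, coe_image, Set.mem_image] at hB hB'
  obtain ⟨i, -, rfl⟩ := hB
  obtain ⟨j, -, rfl⟩ := hB'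
  exact disjoint_kneserBlock fun h => hne (h ▸ rfl)

theorem subset_Icc_of_mem_kneserBlocks {B : Finset ℕ} (hB : B ∈ kneserBlocks N r) :
    B ⊆ Icc 1 (r * N) := by
  obtain ⟨i, hi, rfl⟩ := mem_image.1 hB
  exact kneserBlock_subset (mem_range.1 hi)

theorem disjoint_kneserTail_of_mem_kneserBlocks {B : Finset ℕ} (hB : B ∈ kneserBlocks N r) :
    Disjoint B (kneserTail N r) :=
  disjoint_left.2 fun _ hx => notMem_kneserTail (mem_Icc.1 (subset_Icc_of_mem_kneserBlocks hB hx)).2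

theorem card_kneserBlocks (hr : 1 ≤ r) : #(kneserBlocks N r) = N := by
  rw [kneserBlocks, card_image_of_injective _ fun i j h => ?_, card_range]
  by_contra hij
  have := disjoint_kneserBlock (r := r) hij
  rw [h, disjoint_self_iff_empty, ← card_eq_zero, card_kneserBlock] at this
  omega

theorem card_filter_not_disjoint_kneserBlocks_le (v : Finset ℕ) :
    #{B ∈ kneserBlocks N r | ¬Disjoint v B} ≤ #(v \ kneserTail N r) :=
  card_filter_not_disjoint_le_of_pairwiseDisjoint pairwiseDisjoint_kneserBlocks fun B hB hvB => by
    obtain ⟨x, hxv, hxB⟩ := not_disjoint_iff.1 hvB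
    exact not_disjoint_iff.2 ⟨x, mem_sdiff.2 ⟨hxv,
      disjoint_left.1 (disjoint_kneserTail_of_mem_kneserBlocks hB) hxB⟩, hxB⟩

theorem card_filter_not_disjoint_kneserBlocks_add_one_le (hN : 1 ≤ N) (hr : 2 ≤ r)
    {v : Finset ℕ} (h1 : 1 ∈ v) (h2 : 2 ∈ v) :
    #{B ∈ kneserBlocks N r | ¬Disjoint v B} + 1 ≤ #(v \ kneserTail N r) := by
  have hrN : r ≤ r * N := Nat.le_mul_of_pos_right _ hN
  have h2v : 2 ∈ v \ kneserTail N r := mem_sdiff.2 ⟨h2, notMem_kneserTail (by omega)⟩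
  rw [← card_erase_add_one h2v, add_le_add_iff_right]
  refine card_filter_not_disjoint_le_of_pairwiseDisjoint pairwiseDisjoint_kneserBlocks
    fun B hB hvB => ?_
  obtain ⟨x, hxv, hxB⟩ := not_disjoint_iff.1 hvB
  have hxL := disjoint_left.1 (disjoint_kneserTail_of_mem_kneserBlocks hB) hxB
  by_cases hx2 : x = 2
  · -- the only block containing `2` is `kneserBlock r 0`, which also contains `1`
    obtain ⟨i, -, rfl⟩ := mem_image.1 hB
    have hi : r * i ≤ 1 := by simp only [hx2, kneserBlock, mem_Icc] at hxB; omega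
    have hi0 : i = 0 := by nlinarith
    subst hi0
    refine not_disjoint_iff.2 ⟨1, mem_erase.2 ⟨by omega, mem_sdiff.2 ⟨h1, ?_⟩⟩, ?_⟩
    · exact notMem_kneserTail (by omega)
    · simp only [kneserBlock, mem_Icc]; omega
  · exact not_disjoint_iff.2 ⟨x, mem_erase.2 ⟨hx2, mem_sdiff.2 ⟨hxv, hxL⟩⟩, hxB⟩

theorem card_filter_not_disjoint_blockDomSet_le (hN : 1 ≤ N) (hr : 2 ≤ r) (v : Finset ℕ) :
    #{C ∈ blockDomSet N r | ¬Disjoint v C} ≤ #v + 1 := by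
  rw [blockDomSet, filter_union]
  refine (card_union_le _ _).trans ?_
  have hblocks := card_filter_not_disjoint_kneserBlocks_le (N := N) (r := r) v
  have hvL := card_sdiff_add_card_inter v (kneserTail N r)
  by_cases hL : Disjoint v (kneserTail N r)
  · have hpair := card_filter_not_disjoint_insert_pair_le 1 2 hL
    by_cases h12 : 1 ∈ v ∧ 2 ∈ v
    · have := card_filter_not_disjoint_kneserBlocks_add_one_le hN hr h12.1 h12.2
      have : #(v ∩ {1, 2}) ≤ 2 := (card_le_card inter_subset_right).trans card_le_two
      omega
    · have : #(v ∩ {1, 2}) ≤ 1 := card_le_one.2 fun a ha b hb => by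
        simp only [mem_inter, mem_insert, mem_singleton] at ha hb
        grind
      omega
  · have : 0 < #(v ∩ kneserTail N r) := card_pos.2 (not_disjoint_iff_nonempty_inter.1 hL)
    have : #{C ∈ ({insert 1 (kneserTail N r), insert 2 (kneserTail N r)} : Finset (Finset ℕ)) |
        ¬Disjoint v C} ≤ 2 := (card_filter_le _ _).trans card_le_two
    omega

theorem blockDomSet_subset (hN : 1 ≤ N) (hr : 2 ≤ r) :
    blockDomSet N r ⊆ KneserVerts (r * N + r - 1) r := by
  have hrN : r ≤ r * N := Nat.le_mul_of_pos_right _ hN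
  have htail : kneserTail N r ⊆ Icc 1 (r * N + r - 1) := by
    intro x; simp only [kneserTail, mem_Icc]; omega
  have hcard : #(kneserTail N r) = r - 1 := by simp [kneserTail]; omega
  intro C hC
  rw [mem_kneserVerts]
  rcases mem_union.1 hC with hC | hC
  · refine ⟨(subset_Icc_of_mem_kneserBlocks hC).trans (Icc_subset_Icc_right (by omega)), ?_⟩
    obtain ⟨i, -, rfl⟩ := mem_image.1 hC
    exact card_kneserBlock r i
  · simp only [mem_insert, mem_singleton] at hC
    obtain rfl | rfl := hC <;>
    · refine ⟨insert_subset (mem_Icc.2 (by omega)) htail, ?_⟩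
      rw [card_insert_of_notMem (notMem_kneserTail (by omega)), hcard]
      omega

theorem card_blockDomSet (hN : 1 ≤ N) (hr : 2 ≤ r) : #(blockDomSet N r) = N + 2 := by
  have hrN : r ≤ r * N := Nat.le_mul_of_pos_right _ hN
  have hL : (kneserTail N r).Nonempty := ⟨r * N + 1, by simp [kneserTail]; omega⟩
  have hpair : insert 1 (kneserTail N r) ≠ insert 2 (kneserTail N r) := fun h => by
    have := h ▸ mem_insert_self 1 (kneserTail N r)
    rw [mem_insert] at this
    exact this.elim (by omega) (notMem_kneserTail (by omega))
  rw [blockDomSet, card_union_of_disjoint, card_kneserBlocks (by omega), card_pair hpair]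
  refine disjoint_right.2 fun C hC hCB => ?_
  have hLC : kneserTail N r ⊆ C := by
    simp only [mem_insert, mem_singleton] at hC
    obtain rfl | rfl := hC <;> exact subset_insert _ _
  obtain ⟨x, hx⟩ := hL
  exact disjoint_left.1 (disjoint_kneserTail_of_mem_kneserBlocks hCB) (hLC hx) hx

theorem isKTupleTotalDomSet_blockDomSet (hN : 1 ≤ N) (hr : 2 ≤ r) :
    IsKTupleTotalDomSet (r * N + r - 1) r (N + 1 - r) (blockDomSet N r) := by
  refine ⟨blockDomSet_subset hN hr, fun v hv => ?_⟩
  have hv := (mem_kneserVerts.1 hv).2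
  obtain ⟨x, hx⟩ : v.Nonempty := card_pos.1 (by omega)
  have hadj : {C ∈ blockDomSet N r | KneserAdj v C} = {C ∈ blockDomSet N r | Disjoint v C} :=
    filter_congr fun C _ =>
      ⟨And.right, fun h => ⟨fun hvC => disjoint_left.1 h hx (hvC ▸ hx), h⟩⟩
  have hsplit := card_filter_add_card_filter_not (s := blockDomSet N r) (p := (Disjoint v ·))
  have hmeet := card_filter_not_disjoint_blockDomSet_le hN hr v
  rw [card_blockDomSet hN hr] at hsplit
  rw [hadj]
  omega

end UpperBound

theorem stmt_8 (k r : ℕ) (hk : 2 ≤ k) (hr : 2 ≤ r) :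
    kdomNum (r * (k + r) - 1) r k = k + r + 1 ∧
    ktupleDomNum (r * (k + r) - 1) r k = k + r + 1 ∧
    ktupleTotalDomNum (r * (k + r) - 1) r k = k + r + 1 := by
  set D := blockDomSet (k + r - 1) r
  have hTot : IsKTupleTotalDomSet (r * (k + r) - 1) r k D := by
    have h := isKTupleTotalDomSet_blockDomSet (N := k + r - 1) (by omega) hr
    have : r * (k + r - 1) + r = r * (k + r) := by
      rw [← Nat.mul_add_one]; congr 1; omega
    rwa [show r * (k + r - 1) + r - 1 = r * (k + r) - 1 by omega,
      show k + r - 1 + 1 - r = k by omega] at h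
  have hcard : #D = k + r + 1 := by rw [card_blockDomSet (by omega) hr]; omega
  have hlow (D' : Finset (Finset ℕ)) (h : IsKDomSet (r * (k + r) - 1) r k D') :
      k + r + 1 ≤ #D' := h.add_add_one_le_card hk hr
  refine ⟨IsLeast.csInf_eq ⟨⟨D, hTot.isKTupleDomSet.isKDomSet, hcard⟩, ?_⟩,
    IsLeast.csInf_eq ⟨⟨D, hTot.isKTupleDomSet, hcard⟩, ?_⟩,
    IsLeast.csInf_eq ⟨⟨D, hTot, hcard⟩, ?_⟩⟩ <;> rintro _ ⟨D', hD', rfl⟩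
  · exact hlow D' hD'
  · exact hlow D' hD'.isKDomSet
  · exact hlow D' hD'.isKTupleDomSet.isKDomSet
end

section
/- If n = 2r+1 and a ≥ 2 are positive integers, then ρ_2(K(n+2a, r+a)) ≥ 2·ρ_2(K(n,r)). -/
open Finset

lemma mem_KneserVerts {n r : ℕ} {u : Finset ℕ} :
    u ∈ KneserVerts n r ↔ u ⊆ Finset.Icc 1 n ∧ u.card = r := by
  simp [KneserVerts, Finset.mem_powersetCard]

lemma packing_pair {R : ℕ} (hR : 1 ≤ R) {S : Finset (Finset ℕ)}
    (hS : IsTwoPacking (2*R+1) R S) {u v : Finset ℕ} (hu : u ∈ S) (hv : v ∈ S)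
    (huv : u ≠ v) : (u ∩ v).Nonempty ∧ (u ∩ v).card + 2 ≤ R := by
  obtain ⟨hsub, hpair⟩ := hS
  obtain ⟨hna, hnw⟩ := hpair u hu v hv huv
  obtain ⟨hus, hucard⟩ := mem_KneserVerts.mp (hsub hu)
  obtain ⟨hvs, hvcard⟩ := mem_KneserVerts.mp (hsub hv)
  have hne : (u ∩ v).Nonempty := by
    rw [← Finset.not_disjoint_iff_nonempty_inter]
    intro hd
    exact hna ⟨huv, hd⟩
  refine ⟨hne, ?_⟩
  have hlt : (u ∩ v).card < R := by
    rcases lt_or_ge (u ∩ v).card R with h | h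
    · exact h
    · exfalso
      have h1 : u ∩ v = u := Finset.eq_of_subset_of_card_le Finset.inter_subset_left (by omega)
      have h2 : u ⊆ v := by rw [← h1]; exact Finset.inter_subset_right
      exact huv (Finset.eq_of_subset_of_card_le h2 (by omega))
  have hneq : (u ∩ v).card + 1 ≠ R := by
    intro heq
    set w := Finset.Icc 1 (2*R+1) \ (u ∪ v) with hw
    have huvsub : u ∪ v ⊆ Finset.Icc 1 (2*R+1) := Finset.union_subset hus hvs
    have hcard_uv : (u ∪ v).card = R + 1 := by
      have := Finset.card_union_add_card_inter u v
      omega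
    have hwcard : w.card = R := by
      rw [hw, Finset.card_sdiff_of_subset huvsub, hcard_uv, Nat.card_Icc]
      omega
    have hwmem : w ∈ KneserVerts (2*R+1) R :=
      mem_KneserVerts.mpr ⟨Finset.sdiff_subset, hwcard⟩
    have hdisj : Disjoint (u ∪ v) w := Finset.disjoint_sdiff
    have hdu : Disjoint u w := hdisj.mono_left Finset.subset_union_left
    have hdv : Disjoint w v := (hdisj.mono_left Finset.subset_union_right).symm
    have huw : u ≠ w := by
      intro h
      have : u = ∅ := disjoint_self.mp (h ▸ hdu)
      simp [this] at hucard; omega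
    have hwv : w ≠ v := by
      intro h
      have : v = ∅ := disjoint_self.mp (h ▸ hdv)
      simp [this] at hvcard; omega
    exact hnw w hwmem ⟨⟨huw, hdu⟩, ⟨hwv, hdv⟩⟩
  omega

lemma packing_of_pairs {R : ℕ} {S : Finset (Finset ℕ)}
    (hsub : S ⊆ KneserVerts (2*R+1) R)
    (h : ∀ u ∈ S, ∀ v ∈ S, u ≠ v → (u ∩ v).Nonempty ∧ (u ∩ v).card + 2 ≤ R) :
    IsTwoPacking (2*R+1) R S := by
  refine ⟨hsub, fun u hu v hv huv => ?_⟩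
  obtain ⟨hne, hcard⟩ := h u hu v hv huv
  obtain ⟨hus, hucard⟩ := mem_KneserVerts.mp (hsub hu)
  obtain ⟨hvs, hvcard⟩ := mem_KneserVerts.mp (hsub hv)
  constructor
  · rintro ⟨-, hd⟩
    exact Finset.not_disjoint_iff_nonempty_inter.mpr hne hd
  · rintro w hw ⟨⟨-, hdu⟩, ⟨-, hdv⟩⟩
    obtain ⟨hws, hwcard⟩ := mem_KneserVerts.mp hw
    have hdisj : Disjoint w (u ∪ v) := by
      rw [Finset.disjoint_union_right]; exact ⟨hdu.symm, hdv⟩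
    have hsub2 : w ∪ (u ∪ v) ⊆ Finset.Icc 1 (2*R+1) :=
      Finset.union_subset hws (Finset.union_subset hus hvs)
    have h1 : (w ∪ (u ∪ v)).card ≤ 2*R+1 := by
      have := Finset.card_le_card hsub2
      simpa [Nat.card_Icc] using this
    rw [Finset.card_union_of_disjoint hdisj] at h1
    have h2 := Finset.card_union_add_card_inter u v
    omega

theorem stmt_11 (r a : ℕ) (hr : 1 ≤ r) (ha : 2 ≤ a) :
    2 * twoPackingNum (2 * r + 1) r ≤ twoPackingNum (2 * r + 1 + 2 * a) (r + a) := by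
  set n := 2 * r + 1 with hn
  -- obtain an optimal packing S
  have hPne : {m | ∃ S, IsTwoPacking n r S ∧ S.card = m}.Nonempty :=
    ⟨0, ∅, ⟨Finset.empty_subset _, by simp⟩, rfl⟩
  have hPbdd : BddAbove {m | ∃ S, IsTwoPacking n r S ∧ S.card = m} := by
    refine ⟨(KneserVerts n r).card, ?_⟩
    rintro m ⟨S, hS, rfl⟩
    exact Finset.card_le_card hS.1
  obtain ⟨S, hS, hScard⟩ := Nat.sSup_mem hPne hPbdd
  have hSsub := hS.1
  -- blocks A and B
  set A := Finset.Icc (n + 1) (n + a) with hA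
  set B := Finset.Icc (n + a + 1) (n + 2 * a) with hB
  have hAcard : A.card = a := by rw [hA, Nat.card_Icc]; omega
  have hBcard : B.card = a := by rw [hB, Nat.card_Icc]; omega
  have hmemA : ∀ x, x ∈ A ↔ n + 1 ≤ x ∧ x ≤ n + a := fun x => Finset.mem_Icc
  have hmemB : ∀ x, x ∈ B ↔ n + a + 1 ≤ x ∧ x ≤ n + 2 * a := fun x => Finset.mem_Icc
  have hSle : ∀ u ∈ S, ∀ x ∈ u, x ≤ n := by
    intro u hu x hx
    have := (mem_KneserVerts.mp (hSsub hu)).1 hx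
    exact (Finset.mem_Icc.mp this).2
  have hScardr : ∀ u ∈ S, u.card = r := fun u hu => (mem_KneserVerts.mp (hSsub hu)).2
  -- the new packing
  set T := S.image (· ∪ A) ∪ S.image (· ∪ B) with hT
  -- disjointness facts
  have hdA : ∀ u ∈ S, Disjoint u A := by
    intro u hu
    rw [Finset.disjoint_left]
    intro x hx hxA
    have := hSle u hu x hx
    have := (hmemA x).mp hxA
    omega
  have hdB : ∀ u ∈ S, Disjoint u B := by
    intro u hu
    rw [Finset.disjoint_left]
    intro x hx hxB
    have := hSle u hu x hx
    have := (hmemB x).mp hxB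
    omega
  have hdAB : Disjoint A B := by
    rw [Finset.disjoint_left]
    intro x hxA hxB
    have := (hmemA x).mp hxA
    have := (hmemB x).mp hxB
    omega
  -- card T = 2 * card S
  have hinjA : Set.InjOn (· ∪ A) S := by
    intro u hu v hv h
    have h' : u ∪ A = v ∪ A := h
    have h1 : (u ∪ A) \ A = (v ∪ A) \ A := by rw [h']
    rwa [Finset.union_sdiff_right, Finset.union_sdiff_right,
      Finset.sdiff_eq_self_of_disjoint (hdA u hu),
      Finset.sdiff_eq_self_of_disjoint (hdA v hv)] at h1
  have hinjB : Set.InjOn (· ∪ B) S := by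
    intro u hu v hv h
    have h' : u ∪ B = v ∪ B := h
    have h1 : (u ∪ B) \ B = (v ∪ B) \ B := by rw [h']
    rwa [Finset.union_sdiff_right, Finset.union_sdiff_right,
      Finset.sdiff_eq_self_of_disjoint (hdB u hu),
      Finset.sdiff_eq_self_of_disjoint (hdB v hv)] at h1
  have hAB_ne : ∀ u ∈ S, ∀ v ∈ S, u ∪ A ≠ v ∪ B := by
    intro u hu v hv h
    have h1 : n + 1 ∈ u ∪ A := by
      rw [Finset.mem_union]; right; rw [hmemA]; omega
    rw [h, Finset.mem_union] at h1
    rcases h1 with h1 | h1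
    · have := hSle v hv _ h1; omega
    · have := (hmemB _).mp h1; omega
  have himg_disj : Disjoint (S.image (· ∪ A)) (S.image (· ∪ B)) := by
    rw [Finset.disjoint_left]
    rintro x hx hy
    obtain ⟨u, hu, rfl⟩ := Finset.mem_image.mp hx
    obtain ⟨v, hv, hvx⟩ := Finset.mem_image.mp hy
    exact hAB_ne u hu v hv hvx.symm
  have hTcard : T.card = 2 * S.card := by
    rw [hT, Finset.card_union_of_disjoint himg_disj,
      Finset.card_image_of_injOn hinjA, Finset.card_image_of_injOn hinjB]
    omega
  -- T is in the big vertex set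
  have hbig : ∀ u ∈ S, ∀ C : Finset ℕ, C.card = a → Disjoint u C →
      C ⊆ Finset.Icc 1 (2 * (r + a) + 1) → u ∪ C ∈ KneserVerts (2 * (r + a) + 1) (r + a) := by
    intro u hu C hCcard hdC hCsub
    refine mem_KneserVerts.mpr ⟨?_, ?_⟩
    · refine Finset.union_subset ?_ hCsub
      intro x hx
      have h1 := (mem_KneserVerts.mp (hSsub hu)).1 hx
      rw [Finset.mem_Icc] at h1 ⊢
      omega
    · rw [Finset.card_union_of_disjoint hdC, hScardr u hu, hCcard]
  have hAsub : A ⊆ Finset.Icc 1 (2 * (r + a) + 1) := by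
    intro x hx; have := (hmemA x).mp hx; rw [Finset.mem_Icc]; omega
  have hBsub : B ⊆ Finset.Icc 1 (2 * (r + a) + 1) := by
    intro x hx; have := (hmemB x).mp hx; rw [Finset.mem_Icc]; omega
  have hTsub : T ⊆ KneserVerts (2 * (r + a) + 1) (r + a) := by
    intro x hx
    rw [hT, Finset.mem_union] at hx
    rcases hx with hx | hx
    · obtain ⟨u, hu, rfl⟩ := Finset.mem_image.mp hx
      exact hbig u hu A hAcard (hdA u hu) hAsub
    · obtain ⟨u, hu, rfl⟩ := Finset.mem_image.mp hx
      exact hbig u hu B hBcard (hdB u hu) hBsub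
  -- intersection computations
  have hinterAA : ∀ u v : Finset ℕ, (u ∪ A) ∩ (v ∪ A) = (u ∩ v) ∪ A := by
    intro u v; ext x
    simp only [Finset.mem_inter, Finset.mem_union]
    tauto
  have hinterBB : ∀ u v : Finset ℕ, (u ∪ B) ∩ (v ∪ B) = (u ∩ v) ∪ B := by
    intro u v; ext x
    simp only [Finset.mem_inter, Finset.mem_union]
    tauto
  have hinterAB : ∀ u ∈ S, ∀ v ∈ S, (u ∪ A) ∩ (v ∪ B) = u ∩ v := by
    intro u hu v hv; ext x
    simp only [Finset.mem_inter, Finset.mem_union]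
    constructor
    · rintro ⟨h1 | h1, h2 | h2⟩
      · exact ⟨h1, h2⟩
      · exact absurd ((hmemB x).mp h2) (by have := hSle u hu x h1; omega)
      · exact absurd ((hmemA x).mp h1) (by have := hSle v hv x h2; omega)
      · exact absurd ((hmemB x).mp h2) (by have := (hmemA x).mp h1; omega)
    · rintro ⟨h1, h2⟩; exact ⟨Or.inl h1, Or.inl h2⟩
  have hAne : A.Nonempty := by rw [← Finset.card_pos, hAcard]; omega
  have hBne : B.Nonempty := by rw [← Finset.card_pos, hBcard]; omega
  -- pairwise condition for T
  have hTpair : ∀ x ∈ T, ∀ y ∈ T, x ≠ y →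
      (x ∩ y).Nonempty ∧ (x ∩ y).card + 2 ≤ r + a := by
    have base : ∀ u ∈ S, ∀ v ∈ S, (u ∩ v).Nonempty ∧
        (u = v → (u ∩ v).card = r) ∧ (u ≠ v → (u ∩ v).card + 2 ≤ r) := by
      intro u hu v hv
      rcases eq_or_ne u v with rfl | huv
      · refine ⟨?_, fun _ => ?_, fun h => absurd rfl h⟩
        · rw [Finset.inter_self, ← Finset.card_pos, hScardr u hu]; omega
        · rw [Finset.inter_self, hScardr u hu]
      · obtain ⟨h1, h2⟩ := packing_pair hr hS hu hv huv
        exact ⟨h1, fun h => absurd h huv, fun _ => h2⟩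
    intro x hx y hy hxy
    rw [hT, Finset.mem_union] at hx hy
    rcases hx with hx | hx <;> rcases hy with hy | hy <;>
      [obtain ⟨u, hu, rfl⟩ := Finset.mem_image.mp hx;
       obtain ⟨u, hu, rfl⟩ := Finset.mem_image.mp hx;
       obtain ⟨u, hu, rfl⟩ := Finset.mem_image.mp hx;
       obtain ⟨u, hu, rfl⟩ := Finset.mem_image.mp hx] <;>
      [obtain ⟨v, hv, rfl⟩ := Finset.mem_image.mp hy;
       obtain ⟨v, hv, rfl⟩ := Finset.mem_image.mp hy;
       obtain ⟨v, hv, rfl⟩ := Finset.mem_image.mp hy;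
       obtain ⟨v, hv, rfl⟩ := Finset.mem_image.mp hy]
    · -- u ∪ A, v ∪ A
      have huv : u ≠ v := fun h => hxy (by rw [h])
      obtain ⟨-, -, h2⟩ := base u hu v hv
      rw [hinterAA]
      refine ⟨hAne.mono Finset.subset_union_right, ?_⟩
      rw [Finset.card_union_of_disjoint
        ((hdA u hu).mono_left Finset.inter_subset_left), hAcard]
      have := h2 huv; omega
    · -- u ∪ A, v ∪ B
      obtain ⟨h0, h1, h2⟩ := base u hu v hv
      rw [hinterAB u hu v hv]
      refine ⟨h0, ?_⟩
      rcases eq_or_ne u v with rfl | huv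
      · have := h1 rfl; omega
      · have := h2 huv; omega
    · -- u ∪ B, v ∪ A
      obtain ⟨h0, h1, h2⟩ := base v hv u hu
      rw [Finset.inter_comm, hinterAB v hv u hu]
      refine ⟨h0, ?_⟩
      rcases eq_or_ne v u with rfl | huv
      · have := h1 rfl; omega
      · have := h2 huv; omega
    · -- u ∪ B, v ∪ B
      have huv : u ≠ v := fun h => hxy (by rw [h])
      obtain ⟨-, -, h2⟩ := base u hu v hv
      rw [hinterBB]
      refine ⟨hBne.mono Finset.subset_union_right, ?_⟩
      rw [Finset.card_union_of_disjoint
        ((hdB u hu).mono_left Finset.inter_subset_left), hBcard]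
      have := h2 huv; omega
  have hTpack : IsTwoPacking (2 * (r + a) + 1) (r + a) T :=
    packing_of_pairs hTsub hTpair
  -- conclude
  have hbdd' : BddAbove {m | ∃ S', IsTwoPacking (2 * (r + a) + 1) (r + a) S' ∧ S'.card = m} := by
    refine ⟨(KneserVerts (2 * (r + a) + 1) (r + a)).card, ?_⟩
    rintro m ⟨S', hS', rfl⟩
    exact Finset.card_le_card hS'.1
  have hle : 2 * S.card ≤ twoPackingNum (2 * (r + a) + 1) (r + a) := by
    apply le_csSup hbdd'
    exact ⟨T, hTpack, hTcard⟩
  have h3 : twoPackingNum n r = S.card := hScard.symm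
  have heq : n + 2 * a = 2 * (r + a) + 1 := by omega
  rw [h3, heq]
  exact hle
end
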